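/- Let I : (0,1) → (0,1) be quasiconcave and satisfy condition (★). Then there exists C > 0 such that for every f ∈ M_+(0,1) and every t ∈ (0,1): (1/t)·∫_0^t (T_I f)(s) ds ≤ C·(I(t)/t)·sup_{t≤s<1} (s/I(s)) f^{**}(s). (In the paper's notation, (T_I f)^{**} ≲ T_I f^{**}, using that T_I f is nonincreasing.) -/
import Mathlib


open MeasureTheory Set Filter
open scoped ENNReal

noncomputable section

/-- The nonincreasing rearrangement of `f` over `(0,1)`. -/
def rearr (f : ℝ → ℝ≥0∞) (t : ℝ) : ℝ≥0∞ :=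
  sInf {l : ℝ≥0∞ | volume {s ∈ Set.Ioo (0:ℝ) 1 | l < f s} ≤ ENNReal.ofReal t}

/-- The maximal nonincreasing rearrangement `f^{**}(t) = (1/t) ∫_0^t f^*(s) ds`. -/
def dstar (f : ℝ → ℝ≥0∞) (t : ℝ) : ℝ≥0∞ :=
  (ENNReal.ofReal t)⁻¹ * ∫⁻ s in Set.Ioo (0:ℝ) t, rearr f s

/-- The `L¹(0,1)` norm. -/
def lOne (f : ℝ → ℝ≥0∞) : ℝ≥0∞ := ∫⁻ t in Set.Ioo (0:ℝ) 1, f t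

/-- The norm of the Marcinkiewicz-type space `m_I`. -/
def mNorm (I : ℝ → ℝ) (f : ℝ → ℝ≥0∞) : ℝ≥0∞ :=
  ⨆ t ∈ Set.Ioo (0:ℝ) 1, ENNReal.ofReal (I t) * rearr f t

/-- The norm of `m_Ĩ` where `Ĩ(t) = t / I(t)`. -/
def mNormTilde (I : ℝ → ℝ) (f : ℝ → ℝ≥0∞) : ℝ≥0∞ :=
  ⨆ t ∈ Set.Ioo (0:ℝ) 1, ENNReal.ofReal (t / I t) * rearr f t

/-- The supremum operator `S_I f(t) = (1/I(t)) sup_{0<s≤t} I(s) f^*(s)`. -/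
def SI (I : ℝ → ℝ) (f : ℝ → ℝ≥0∞) : ℝ → ℝ≥0∞ := fun t =>
  (ENNReal.ofReal (I t))⁻¹ * ⨆ s ∈ Set.Ioc (0:ℝ) t, ENNReal.ofReal (I s) * rearr f s

/-- The supremum operator `T_I f(t) = (I(t)/t) sup_{t≤s<1} (s/I(s)) f^*(s)`. -/
def TI (I : ℝ → ℝ) (f : ℝ → ℝ≥0∞) : ℝ → ℝ≥0∞ := fun t =>
  ENNReal.ofReal (I t / t) * ⨆ s ∈ Set.Ico t 1, ENNReal.ofReal (s / I s) * rearr f s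

/-- `H_I f(t) = ∫_t^1 f(s)/I(s) ds`. -/
def HI (I : ℝ → ℝ) (f : ℝ → ℝ≥0∞) : ℝ → ℝ≥0∞ := fun t =>
  ∫⁻ s in Set.Ioo t 1, f s / ENNReal.ofReal (I s)

/-- `R_I f(t) = (1/I(t)) ∫_0^t f(s) ds`. -/
def RI (I : ℝ → ℝ) (f : ℝ → ℝ≥0∞) : ℝ → ℝ≥0∞ := fun t =>
  (ENNReal.ofReal (I t))⁻¹ * ∫⁻ s in Set.Ioo (0:ℝ) t, f s

/-- `I : (0,1) → (0,1)` is quasiconcave: a nondecreasing bijection of `(0,1)` onto `(0,1)`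
with `I(t)/t` nonincreasing, `I(0+) = 0` and `I(1-) = 1`. -/
def Quasiconcave (I : ℝ → ℝ) : Prop :=
  Set.BijOn I (Set.Ioo 0 1) (Set.Ioo 0 1) ∧
  MonotoneOn I (Set.Ioo 0 1) ∧
  AntitoneOn (fun t => I t / t) (Set.Ioo 0 1) ∧
  Tendsto I (nhdsWithin 0 (Set.Ioo 0 1)) (nhds 0) ∧
  Tendsto I (nhdsWithin 1 (Set.Ioo 0 1)) (nhds 1)

/-- Condition (★): `∫_0^t I(s)/s ds ≲ I(t)`. -/
def StarCond (I : ℝ → ℝ) : Prop :=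
  ∃ C : ℝ, 0 < C ∧ ∀ t ∈ Set.Ioo (0:ℝ) 1,
    ∫⁻ s in Set.Ioo (0:ℝ) t, ENNReal.ofReal (I s / s) ≤ ENNReal.ofReal (C * I t)

/-- The average property: `∫_0^t ds/I(s) ≲ t/I(t)`. -/
def AvgProp (I : ℝ → ℝ) : Prop :=
  ∃ C : ℝ, 0 < C ∧ ∀ t ∈ Set.Ioo (0:ℝ) 1,
    ∫⁻ s in Set.Ioo (0:ℝ) t, ENNReal.ofReal (1 / I s) ≤ ENNReal.ofReal (C * (t / I t))

/-- The condition `∫_t^1 I(s)/s² ds ≲ (1/t) ∫_0^t I(s)/s ds`. -/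
def MaxCond (I : ℝ → ℝ) : Prop :=
  ∃ C : ℝ, 0 < C ∧ ∀ t ∈ Set.Ioo (0:ℝ) 1,
    ∫⁻ s in Set.Ioo t 1, ENNReal.ofReal (I s / s ^ 2) ≤
      ENNReal.ofReal (C / t) * ∫⁻ s in Set.Ioo (0:ℝ) t, ENNReal.ofReal (I s / s)

/-- The class `𝒬` of quasiconcave functions. -/
def ClassQ (I : ℝ → ℝ) : Prop :=
  Quasiconcave I ∧ StarCond I ∧ AvgProp I ∧ MaxCond I ∧
  ∃ c d : ℝ,
    IsLUB {l : ℝ | 0 ≤ l ∧ ∀ t ∈ Set.Ioo (0:ℝ) 1,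
      ENNReal.ofReal (l * (I t / t ^ 2 - 1)) ≤
        ∫⁻ s in Set.Ioo t 1, ENNReal.ofReal (I s / s ^ 3)} c ∧
    IsLeast {e : ℝ | 0 < e ∧ ∀ t ∈ Set.Ioo (0:ℝ) 1,
      ∫⁻ s in Set.Ioo t 1, ENNReal.ofReal (I s / s ^ 2) ≤
        ENNReal.ofReal (e * (I t / t))} d ∧
    (1 - c) * d ≤ c

/-- The `Δ₂` condition: `I(2t) ≤ C I(t)` for `t ∈ (0,1/2)`. -/
def Delta2 (I : ℝ → ℝ) : Prop :=
  ∃ C : ℝ, 0 < C ∧ ∀ t ∈ Set.Ioo (0:ℝ) (1/2), I (2 * t) ≤ C * I t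

/-- A rearrangement-invariant Banach function norm on `M₊(0,1)`. -/
def IsRiNorm (ρ : (ℝ → ℝ≥0∞) → ℝ≥0∞) : Prop :=
  (∀ f : ℝ → ℝ≥0∞, Measurable f →
      (ρ f = 0 ↔ f =ᵐ[volume.restrict (Set.Ioo (0:ℝ) 1)] 0)) ∧
  (∀ f : ℝ → ℝ≥0∞, Measurable f → ∀ a : ℝ, 0 ≤ a →
      ρ (fun t => ENNReal.ofReal a * f t) = ENNReal.ofReal a * ρ f) ∧
  (∀ f g : ℝ → ℝ≥0∞, Measurable f → Measurable g →
      ρ (fun t => f t + g t) ≤ ρ f + ρ g) ∧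
  (∀ f g : ℝ → ℝ≥0∞, Measurable f → Measurable g →
      (∀ᵐ t ∂(volume.restrict (Set.Ioo (0:ℝ) 1)), f t ≤ g t) → ρ f ≤ ρ g) ∧
  (∀ (fn : ℕ → ℝ → ℝ≥0∞) (f : ℝ → ℝ≥0∞), (∀ n, Measurable (fn n)) → Measurable f →
      (∀ᵐ t ∂(volume.restrict (Set.Ioo (0:ℝ) 1)), Monotone (fun n => fn n t)) →
      (∀ᵐ t ∂(volume.restrict (Set.Ioo (0:ℝ) 1)), (⨆ n, fn n t) = f t) →
      (⨆ n, ρ (fn n)) = ρ f) ∧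
  (ρ (fun _ => 1) < ⊤) ∧
  (∃ c : ℝ, 0 < c ∧ ∀ f : ℝ → ℝ≥0∞, Measurable f →
      ∫⁻ t in Set.Ioo (0:ℝ) 1, f t ≤ ENNReal.ofReal c * ρ f) ∧
  (∀ f : ℝ → ℝ≥0∞, Measurable f → ρ f = ρ (rearr f))

/-- The associate norm `ρ'`. -/
def assoc (ρ : (ℝ → ℝ≥0∞) → ℝ≥0∞) (f : ℝ → ℝ≥0∞) : ℝ≥0∞ :=
  ⨆ (g : ℝ → ℝ≥0∞) (_ : Measurable g ∧ ρ g ≤ 1),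
    ∫⁻ t in Set.Ioo (0:ℝ) 1, f t * g t

/-- The optimal target norm `‖f‖_{Y_X}` of the r.i. norm `ρ = ‖·‖_X` under `H_I`. -/
def optTargetNorm (I : ℝ → ℝ) (ρ : (ℝ → ℝ≥0∞) → ℝ≥0∞) (f : ℝ → ℝ≥0∞) : ℝ≥0∞ :=
  ⨆ (g : ℝ → ℝ≥0∞) (_ : Measurable g ∧ assoc ρ (RI I (rearr g)) ≤ 1),
    ∫⁻ t in Set.Ioo (0:ℝ) 1, rearr f t * rearr g t

/-- The optimal domain norm `‖f‖_{X_Y} = sup_{h ∼ f} ‖H_I h‖_Y`. -/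
def optDomainNorm (I : ℝ → ℝ) (ρY : (ℝ → ℝ≥0∞) → ℝ≥0∞) (f : ℝ → ℝ≥0∞) : ℝ≥0∞ :=
  ⨆ (h : ℝ → ℝ≥0∞)
    (_ : Measurable h ∧ ∀ t ∈ Set.Ioo (0:ℝ) 1, rearr h t = rearr f t),
      ρY (HI I h)

/-- `H_I : X → Y` boundedly. -/
def HIBounded (I : ℝ → ℝ) (ρX ρY : (ℝ → ℝ≥0∞) → ℝ≥0∞) : Prop :=
  ∃ C : ℝ, 0 < C ∧ ∀ f : ℝ → ℝ≥0∞, Measurable f →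
    ρY (HI I f) ≤ ENNReal.ofReal C * ρX f

/-- `X` is the optimal domain space for `Y` under `H_I`. -/
def IsOptimalDomain (I : ℝ → ℝ) (ρX ρY : (ℝ → ℝ≥0∞) → ℝ≥0∞) : Prop :=
  HIBounded I ρX ρY ∧
  ∀ ρZ : (ℝ → ℝ≥0∞) → ℝ≥0∞, IsRiNorm ρZ → HIBounded I ρZ ρY →
    ∃ C : ℝ, 0 < C ∧ ∀ f : ℝ → ℝ≥0∞, Measurable f →
      ρX f ≤ ENNReal.ofReal C * ρZ f

/-- `Y` is the optimal target space for `X` under `H_I`. -/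
def IsOptimalTarget (I : ℝ → ℝ) (ρX ρY : (ℝ → ℝ≥0∞) → ℝ≥0∞) : Prop :=
  HIBounded I ρX ρY ∧
  ∀ ρZ : (ℝ → ℝ≥0∞) → ℝ≥0∞, IsRiNorm ρZ → HIBounded I ρX ρZ →
    ∃ C : ℝ, 0 < C ∧ ∀ f : ℝ → ℝ≥0∞, Measurable f →
      ρZ f ≤ ENNReal.ofReal C * ρY f

/-- The nonincreasing rearrangement is antitone. -/
lemma rearr_antitone (f : ℝ → ℝ≥0∞) : Antitone (rearr f) := by
  intro a b hab
  exact sInf_le_sInf fun l hl => le_trans hl (ENNReal.ofReal_le_ofReal hab)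

lemma rearr_measurable (f : ℝ → ℝ≥0∞) : Measurable (rearr f) :=
  (rearr_antitone f).measurable

/-- Theorem 3.10 / `lem:TIHLP`.  For quasiconcave `I` satisfying (★),
`(T_I f)^{**}(t) ≲ (T_I f^{**})(t)` for all `f ∈ M₊(0,1)` and `t ∈ (0,1)`. -/
theorem statement10 (I : ℝ → ℝ) (hqc : Quasiconcave I) (hstar : StarCond I) :
    ∃ C : ℝ, 0 < C ∧ ∀ f : ℝ → ℝ≥0∞, Measurable f → ∀ t ∈ Set.Ioo (0:ℝ) 1,
      (ENNReal.ofReal t)⁻¹ * ∫⁻ s in Set.Ioo (0:ℝ) t, TI I f s ≤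
        ENNReal.ofReal (C * (I t / t)) *
          ⨆ s ∈ Set.Ico t 1, ENNReal.ofReal (s / I s) * dstar f s := by
  obtain ⟨hbij, hmono, hanti, -, -⟩ := hqc
  obtain ⟨Cs, hCs, hstar'⟩ := hstar
  have hIm : ∀ s ∈ Set.Ioo (0:ℝ) 1, I s ∈ Set.Ioo (0:ℝ) 1 := fun s hs => hbij.mapsTo hs
  -- a globally monotone (hence measurable) extension of I
  set J : ℝ → ℝ := fun s => if 1 ≤ s then 1 else if s ≤ 0 then 0 else I s with hJ
  have hJeq : ∀ s ∈ Set.Ioo (0:ℝ) 1, J s = I s := by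
    intro s hs
    simp only [hJ, if_neg (not_le.2 hs.2), if_neg (not_le.2 hs.1)]
  have hJmono : Monotone J := by
    intro x y hxy
    simp only [hJ]
    by_cases hx1 : 1 ≤ x
    · rw [if_pos hx1, if_pos (hx1.trans hxy)]
    · rw [if_neg hx1]
      by_cases hx0 : x ≤ 0
      · rw [if_pos hx0]
        by_cases hy1 : 1 ≤ y
        · rw [if_pos hy1]; norm_num
        · rw [if_neg hy1]
          by_cases hy0 : y ≤ 0
          · rw [if_pos hy0]
          · rw [if_neg hy0]
            exact (hIm y ⟨not_le.1 hy0, not_le.1 hy1⟩).1.le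
      · rw [if_neg hx0]
        have hxI : x ∈ Set.Ioo (0:ℝ) 1 := ⟨not_le.1 hx0, not_le.1 hx1⟩
        by_cases hy1 : 1 ≤ y
        · rw [if_pos hy1]; exact (hIm x hxI).2.le
        · rw [if_neg hy1, if_neg (by linarith [hxI.1] : ¬ y ≤ 0)]
          exact hmono hxI ⟨hxI.1.trans_le hxy, not_le.1 hy1⟩ hxy
  have hJmeas : Measurable J := hJmono.measurable
  refine ⟨5 * Cs, by positivity, ?_⟩
  intro f hf t ht
  have ht0 : (0:ℝ) < t := ht.1
  have ht1 : t < 1 := ht.2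
  set r : ℝ → ℝ≥0∞ := rearr f with hr
  have hra : Antitone r := rearr_antitone f
  have hrm : Measurable r := hra.measurable
  set g : ℝ → ℝ≥0∞ := fun v => r v / ENNReal.ofReal (J v) with hg
  have hgm : Measurable g := hrm.div (ENNReal.measurable_ofReal.comp hJmeas)
  set h : ℝ → ℝ≥0∞ := fun s => ENNReal.ofReal (J s / s) with hh
  have hhm : Measurable h := ENNReal.measurable_ofReal.comp (hJmeas.div measurable_id)
  set A := ⨆ s ∈ Set.Ico t 1, ENNReal.ofReal (s / I s) * dstar f s with hA
  set B := ⨆ u ∈ Set.Ico t 1, ENNReal.ofReal (u / I u) * r u with hB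
  set Φ : ℝ → ℝ≥0∞ := fun s => ⨆ u ∈ Set.Icc s t, ENNReal.ofReal (u / I u) * r u with hΦ
  have hΦanti : Antitone Φ := by
    intro a b hab
    exact biSup_mono fun u hu => ⟨hab.trans hu.1, hu.2⟩
  have hΦm : Measurable Φ := hΦanti.measurable
  -- the (★) condition in terms of J
  have hstarJ : ∀ m ∈ Set.Ioo (0:ℝ) 1,
      (∫⁻ s in Set.Ioo (0:ℝ) m, h s) ≤ ENNReal.ofReal (Cs * I m) := by
    intro m hm
    have e : ∫⁻ s in Set.Ioo (0:ℝ) m, h s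
        = ∫⁻ s in Set.Ioo (0:ℝ) m, ENNReal.ofReal (I s / s) := by
      apply lintegral_congr_ae
      filter_upwards [ae_restrict_mem measurableSet_Ioo] with s hs
      simp only [hh]
      rw [hJeq s ⟨hs.1, hs.2.trans hm.2⟩]
    rw [e]
    exact hstar' m hm
  -- f^* ≤ f^{**}
  have hrd : ∀ u ∈ Set.Ioo (0:ℝ) 1, r u ≤ dstar f u := by
    intro u hu
    have h1 : ENNReal.ofReal u * r u ≤ ∫⁻ v in Set.Ioo (0:ℝ) u, rearr f v := by
      calc ENNReal.ofReal u * r u = r u * volume (Set.Ioo (0:ℝ) u) := by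
            rw [Real.volume_Ioo, sub_zero, mul_comm]
        _ = ∫⁻ _ in Set.Ioo (0:ℝ) u, r u := (setLIntegral_const _ _).symm
        _ ≤ ∫⁻ v in Set.Ioo (0:ℝ) u, r v :=
            lintegral_mono_ae (by
              filter_upwards [ae_restrict_mem measurableSet_Ioo] with v hv
              exact hra hv.2.le)
    calc r u = (ENNReal.ofReal u)⁻¹ * (ENNReal.ofReal u * r u) := by
          rw [← mul_assoc, ENNReal.inv_mul_cancel (by simp [hu.1]) ENNReal.ofReal_ne_top,
            one_mul]
      _ ≤ dstar f u := mul_le_mul_right h1 _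
  have hBA : B ≤ A :=
    iSup₂_mono fun u hu => mul_le_mul_right (hrd u ⟨ht0.trans_le hu.1, hu.2⟩) _
  -- pointwise splitting of T_I f
  have hpt : ∀ s ∈ Set.Ioo (0:ℝ) t, TI I f s ≤ h s * Φ s + h s * B := by
    intro s hs
    have hs1 : s ∈ Set.Ioo (0:ℝ) 1 := ⟨hs.1, hs.2.trans ht1⟩
    have hsup : (⨆ u ∈ Set.Ico s 1, ENNReal.ofReal (u / I u) * rearr f u) ≤ Φ s ⊔ B := by
      refine iSup₂_le fun u hu => ?_
      rcases le_or_gt u t with hut | hut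
      · exact le_sup_of_le_left (le_iSup₂_of_le u ⟨hu.1, hut⟩ le_rfl)
      · exact le_sup_of_le_right (le_iSup₂_of_le u ⟨hut.le, hu.2⟩ le_rfl)
    calc TI I f s ≤ ENNReal.ofReal (I s / s) * (Φ s ⊔ B) := mul_le_mul_right hsup _
      _ = h s * (Φ s ⊔ B) := by simp only [hh]; rw [hJeq s hs1]
      _ ≤ h s * (Φ s + B) := mul_le_mul_right (sup_le le_self_add le_add_self) _
      _ = h s * Φ s + h s * B := mul_add _ _ _
  -- pointwise bound of Φ by an integral
  have hΦΨ : ∀ s ∈ Set.Ioo (0:ℝ) t, Φ s ≤ 2 * ∫⁻ v in Set.Ioo (s/2) t, g v := by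
    intro s hs
    refine iSup₂_le fun u hu => ?_
    have hu0 : 0 < u := hs.1.trans_le hu.1
    have hu1 : u < 1 := lt_of_le_of_lt hu.2 ht1
    have hIu := hIm u ⟨hu0, hu1⟩
    have key : ENNReal.ofReal (u / I u) * r u ≤ 2 * ∫⁻ v in Set.Ioo (u/2) u, g v := by
      have hsub : ∀ v ∈ Set.Ioo (u/2) u, r u / ENNReal.ofReal (I u) ≤ g v := by
        intro v hv
        have hv1 : v ∈ Set.Ioo (0:ℝ) 1 := ⟨lt_trans (by linarith) hv.1, hv.2.trans hu1⟩
        simp only [hg]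
        rw [hJeq v hv1]
        exact ENNReal.div_le_div (hra hv.2.le)
          (ENNReal.ofReal_le_ofReal (hmono hv1 ⟨hu0, hu1⟩ hv.2.le))
      have e1 : (2:ℝ≥0∞) * ENNReal.ofReal (u - u/2) = ENNReal.ofReal u := by
        rw [show (2:ℝ≥0∞) = ENNReal.ofReal 2 by norm_num,
          ← ENNReal.ofReal_mul (by norm_num)]
        congr 1; ring
      have e2 : ENNReal.ofReal (u / I u) * r u
          = r u / ENNReal.ofReal (I u) * ENNReal.ofReal u := by
        rw [ENNReal.ofReal_div_of_pos hIu.1, div_eq_mul_inv, div_eq_mul_inv]; ring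
      calc ENNReal.ofReal (u / I u) * r u
          = 2 * (r u / ENNReal.ofReal (I u) * ENNReal.ofReal (u - u/2)) := by
            rw [show (2:ℝ≥0∞) * (r u / ENNReal.ofReal (I u) * ENNReal.ofReal (u - u/2))
              = r u / ENNReal.ofReal (I u) * ((2:ℝ≥0∞) * ENNReal.ofReal (u - u/2)) by ring,
              e1, e2]
        _ = 2 * ∫⁻ _ in Set.Ioo (u/2) u, (r u / ENNReal.ofReal (I u)) := by
            rw [setLIntegral_const, Real.volume_Ioo]
        _ ≤ 2 * ∫⁻ v in Set.Ioo (u/2) u, g v := by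
            refine mul_le_mul_right (lintegral_mono_ae ?_) 2
            filter_upwards [ae_restrict_mem measurableSet_Ioo] with v hv
            exact hsub v hv
    refine key.trans (mul_le_mul_right (lintegral_mono_set ?_) 2)
    intro v hv
    exact ⟨lt_of_le_of_lt (by linarith [hu.1]) hv.1, hv.2.trans_le hu.2⟩
  -- the product kernel
  set F : ℝ × ℝ → ℝ≥0∞ := fun p => if p.1 < 2 * p.2 then h p.1 * g p.2 else 0 with hF
  have hFm : Measurable F := by
    refine Measurable.ite (measurableSet_lt measurable_fst (measurable_snd.const_mul 2)) ?_
      measurable_const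
    exact (hhm.comp measurable_fst).mul (hgm.comp measurable_snd)
  have hinner1 : ∀ s ∈ Set.Ioo (0:ℝ) t,
      (∫⁻ v in Set.Ioo (0:ℝ) t, F (s, v))
        = h s * ∫⁻ v in Set.Ioo (s/2) t, g v := by
    intro s hs
    have e : ∀ v, F (s, v) = h s * (Set.Ioi (s/2)).indicator g v := by
      intro v
      simp only [hF, Set.indicator_apply, Set.mem_Ioi]
      by_cases hc : s/2 < v
      · rw [if_pos (by linarith), if_pos hc]
      · rw [if_neg (fun hcc => hc (by linarith)), if_neg hc, mul_zero]
    simp_rw [e]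
    rw [lintegral_const_mul _ (hgm.indicator measurableSet_Ioi),
      setLIntegral_indicator measurableSet_Ioi]
    have hset1 : Set.Ioi (s/2) ∩ Set.Ioo (0:ℝ) t = Set.Ioo (s/2) t := by
      ext v
      simp only [Set.mem_inter_iff, Set.mem_Ioi, Set.mem_Ioo]
      constructor
      · rintro ⟨h1, _, h3⟩; exact ⟨h1, h3⟩
      · rintro ⟨h1, h2⟩; exact ⟨h1, by linarith [hs.1], h2⟩
    rw [hset1]
  have hinner2 : ∀ v ∈ Set.Ioo (0:ℝ) t,
      (∫⁻ s in Set.Ioo (0:ℝ) t, F (s, v)) ≤ ENNReal.ofReal (2 * Cs) * r v := by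
    intro v hv
    have hv1 : v ∈ Set.Ioo (0:ℝ) 1 := ⟨hv.1, hv.2.trans ht1⟩
    have hv0' : (0:ℝ) < v := hv.1
    have hvt' : v < t := hv.2
    have hIv := hIm v hv1
    have e : ∀ s, F (s, v) = (Set.Iio (2*v)).indicator h s * g v := by
      intro s
      simp only [hF, Set.indicator_apply, Set.mem_Iio]
      by_cases hc : s < 2 * v
      · rw [if_pos hc, if_pos hc]
      · rw [if_neg hc, if_neg hc, zero_mul]
    simp_rw [e]
    rw [lintegral_mul_const _ (hhm.indicator measurableSet_Iio),
      setLIntegral_indicator measurableSet_Iio]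
    have hset : Set.Iio (2*v) ∩ Set.Ioo (0:ℝ) t = Set.Ioo (0:ℝ) (min (2*v) t) := by
      ext x
      simp only [Set.mem_inter_iff, Set.mem_Iio, Set.mem_Ioo, lt_min_iff]
      tauto
    rw [hset]
    have hmIoo : min (2*v) t ∈ Set.Ioo (0:ℝ) 1 :=
      ⟨lt_min (by linarith) ht0, (min_le_right _ _).trans_lt ht1⟩
    have hImin : I (min (2*v) t) ≤ 2 * I v := by
      rcases le_total (2*v) t with hle | hle
      · rw [min_eq_left hle]
        have h2v : (2*v) ∈ Set.Ioo (0:ℝ) 1 := ⟨by linarith, by linarith⟩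
        have hd := hanti hv1 h2v (by linarith)
        have h2 : I (2*v) / (2*v) ≤ I v / v := hd
        have h3 : I (2*v) ≤ (I v / v) * (2*v) := (div_le_iff₀ (by linarith)).1 h2
        have hv0 : v ≠ 0 := ne_of_gt hv.1
        calc I (2*v) ≤ (I v / v) * (2*v) := h3
          _ = 2 * I v := by field_simp
      · rw [min_eq_right hle]
        have hd := hanti hv1 ht hv.2.le
        have h2 : I t / t ≤ I v / v := hd
        have h3 : I t ≤ (I v / v) * t := (div_le_iff₀ ht0).1 h2
        have h4 : (I v / v) * t ≤ (I v / v) * (2*v) := by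
          exact mul_le_mul_of_nonneg_left hle (div_nonneg hIv.1.le hv.1.le)
        have hv0 : v ≠ 0 := ne_of_gt hv.1
        calc I t ≤ (I v / v) * (2*v) := h3.trans h4
          _ = 2 * I v := by field_simp
    have hgv : g v = r v / ENNReal.ofReal (I v) := by
      simp only [hg]; rw [hJeq v hv1]
    calc (∫⁻ s in Set.Ioo (0:ℝ) (min (2*v) t), h s) * g v
        ≤ ENNReal.ofReal (Cs * I (min (2*v) t)) * g v :=
          mul_le_mul_left (hstarJ _ hmIoo) _
      _ ≤ ENNReal.ofReal (Cs * (2 * I v)) * g v := by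
          refine mul_le_mul_left (ENNReal.ofReal_le_ofReal ?_) _
          nlinarith
      _ = ENNReal.ofReal (2 * Cs) * (ENNReal.ofReal (I v) * (r v / ENNReal.ofReal (I v))) := by
          rw [hgv, show Cs * (2 * I v) = (2 * Cs) * I v by ring,
            ENNReal.ofReal_mul (by positivity), mul_assoc]
      _ ≤ ENNReal.ofReal (2 * Cs) * r v := mul_le_mul_right ENNReal.mul_div_le _
  -- main chain
  have hG2m : Measurable fun s => h s * Φ s := hhm.mul hΦm
  have main1 : (∫⁻ s in Set.Ioo (0:ℝ) t, TI I f s)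
      ≤ (∫⁻ s in Set.Ioo (0:ℝ) t, h s * Φ s) + ∫⁻ s in Set.Ioo (0:ℝ) t, h s * B := by
    calc (∫⁻ s in Set.Ioo (0:ℝ) t, TI I f s)
        ≤ ∫⁻ s in Set.Ioo (0:ℝ) t, (h s * Φ s + h s * B) := by
          refine lintegral_mono_ae ?_
          filter_upwards [ae_restrict_mem measurableSet_Ioo] with s hs
          exact hpt s hs
      _ = _ := lintegral_add_left hG2m _
  have partA : (∫⁻ s in Set.Ioo (0:ℝ) t, h s * B) ≤ ENNReal.ofReal (Cs * I t) * A := by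
    rw [lintegral_mul_const _ hhm]
    exact mul_le_mul' (hstarJ t ht) hBA
  have partB : (∫⁻ s in Set.Ioo (0:ℝ) t, h s * Φ s)
      ≤ ENNReal.ofReal (4 * Cs) * ∫⁻ v in Set.Ioo (0:ℝ) t, r v := by
    have hFim : Measurable fun s => ∫⁻ v in Set.Ioo (0:ℝ) t, F (s, v) :=
      hFm.lintegral_prod_right'
    calc (∫⁻ s in Set.Ioo (0:ℝ) t, h s * Φ s)
        ≤ ∫⁻ s in Set.Ioo (0:ℝ) t, 2 * ∫⁻ v in Set.Ioo (0:ℝ) t, F (s, v) := by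
          refine lintegral_mono_ae ?_
          filter_upwards [ae_restrict_mem measurableSet_Ioo] with s hs
          refine (mul_le_mul_right (hΦΨ s hs) _).trans_eq ?_
          rw [hinner1 s hs]; ring
      _ = 2 * ∫⁻ s in Set.Ioo (0:ℝ) t, ∫⁻ v in Set.Ioo (0:ℝ) t, F (s, v) :=
          lintegral_const_mul 2 hFim
      _ = 2 * ∫⁻ v in Set.Ioo (0:ℝ) t, ∫⁻ s in Set.Ioo (0:ℝ) t, F (s, v) := by
          rw [lintegral_lintegral_swap (hFm.aemeasurable)]
      _ ≤ 2 * ∫⁻ v in Set.Ioo (0:ℝ) t, ENNReal.ofReal (2 * Cs) * r v := by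
          refine mul_le_mul_right (lintegral_mono_ae ?_) 2
          filter_upwards [ae_restrict_mem measurableSet_Ioo] with v hv
          exact hinner2 v hv
      _ = ENNReal.ofReal (4 * Cs) * ∫⁻ v in Set.Ioo (0:ℝ) t, r v := by
          rw [lintegral_const_mul _ hrm, ← mul_assoc]
          congr 1
          rw [show (2:ℝ≥0∞) = ENNReal.ofReal 2 by norm_num,
            ← ENNReal.ofReal_mul (by norm_num)]
          congr 1
          ring
  have hIt := hIm t ht
  have hAt : ENNReal.ofReal (t / I t) * dstar f t ≤ A :=
    le_iSup₂_of_le t ⟨le_rfl, ht1⟩ le_rfl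
  have final1 : (ENNReal.ofReal t)⁻¹ *
      (ENNReal.ofReal (4 * Cs) * ∫⁻ v in Set.Ioo (0:ℝ) t, r v)
      ≤ ENNReal.ofReal (4 * Cs * (I t / t)) * A := by
    have e : (ENNReal.ofReal t)⁻¹ *
        (ENNReal.ofReal (4 * Cs) * ∫⁻ v in Set.Ioo (0:ℝ) t, r v)
        = ENNReal.ofReal (4 * Cs) * dstar f t := by
      rw [dstar]; ring
    rw [e]
    have hIt0 : I t ≠ 0 := ne_of_gt hIt.1
    have ht0' : t ≠ 0 := ne_of_gt ht0
    have e2 : dstar f t = ENNReal.ofReal (I t / t) * (ENNReal.ofReal (t / I t) * dstar f t) := by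
      rw [← mul_assoc, ← ENNReal.ofReal_mul (div_nonneg hIt.1.le ht0.le),
        show (I t / t) * (t / I t) = 1 by field_simp, ENNReal.ofReal_one, one_mul]
    rw [e2, ← mul_assoc, ← ENNReal.ofReal_mul (by linarith : (0:ℝ) ≤ 4 * Cs)]
    exact mul_le_mul_right hAt _
  have final2 : (ENNReal.ofReal t)⁻¹ * (ENNReal.ofReal (Cs * I t) * A)
      = ENNReal.ofReal (Cs * (I t / t)) * A := by
    rw [show (ENNReal.ofReal t)⁻¹ * (ENNReal.ofReal (Cs * I t) * A)
        = ENNReal.ofReal (Cs * I t) / ENNReal.ofReal t * A by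
          rw [div_eq_mul_inv]; ring,
      ← ENNReal.ofReal_div_of_pos ht0, mul_div_assoc]
  calc (ENNReal.ofReal t)⁻¹ * ∫⁻ s in Set.Ioo (0:ℝ) t, TI I f s
      ≤ (ENNReal.ofReal t)⁻¹ *
        ((∫⁻ s in Set.Ioo (0:ℝ) t, h s * Φ s) + ∫⁻ s in Set.Ioo (0:ℝ) t, h s * B) :=
        mul_le_mul_right main1 _
    _ ≤ (ENNReal.ofReal t)⁻¹ *
        ((ENNReal.ofReal (4 * Cs) * ∫⁻ v in Set.Ioo (0:ℝ) t, r v)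
          + ENNReal.ofReal (Cs * I t) * A) :=
        mul_le_mul_right (add_le_add partB partA) _
    _ = (ENNReal.ofReal t)⁻¹ * (ENNReal.ofReal (4 * Cs) * ∫⁻ v in Set.Ioo (0:ℝ) t, r v)
        + (ENNReal.ofReal t)⁻¹ * (ENNReal.ofReal (Cs * I t) * A) := mul_add _ _ _
    _ ≤ ENNReal.ofReal (4 * Cs * (I t / t)) * A + ENNReal.ofReal (Cs * (I t / t)) * A := by
        rw [final2]
        exact add_le_add final1 le_rfl
    _ = ENNReal.ofReal (5 * Cs * (I t / t)) * A := by
        have hItt : (0:ℝ) ≤ I t / t := div_nonneg hIt.1.le ht0.le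
        rw [← add_mul, ← ENNReal.ofReal_add (by nlinarith) (by nlinarith)]
        congr 2
        ring
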